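/- arXiv:2203.08976 — 3 statements merged into one kernel-verified Lean document; each statement's English description precedes it below -/
import Mathlib

section
/- (Groenewegen's bound.) Let E be a finite-dimensional real inner product space of dimension r ≥ 1 and L ⊆ E a ℤ-lattice, and let λ₁ = λ₁(L) denote the first minimum of L, i.e. the minimum of ‖v‖ over nonzero v ∈ L. Then h⁰_θ(L) ≤ C(r, λ₁), where C(r, λ) = 3^r · (π λ²)^{−r/2} · ∫_{πλ²}^{+∞} u^{r/2} e^{−u} du. -/
/-!
Write `exp (-π ‖v‖²) = ∫_{‖v‖}^∞ 2πt exp (-πt²) dt` and sum over the nonzero lattice vectors: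
`θ - 1 = ∫_{λ₁}^∞ N(t) 2πt exp (-πt²) dt`, where `N(t)` counts the nonzero lattice vectors of
norm `< t`. The balls of radius `λ₁/2` around lattice points are disjoint, so comparing volumes
gives `N(t) ≤ ((2t + λ₁)/λ₁)^r ≤ (3t/λ₁)^r` for `t ≥ λ₁`. The substitution `u = πt²` turns the
resulting integral into `C(r, λ₁)`, and `log θ ≤ θ - 1` concludes.
-/

open Real MeasureTheory Metric Set
open scoped ENNReal

section Packing

variable {E : Type*} [NormedAddCommGroup E] [NormedSpace ℝ E] [FiniteDimensional ℝ E]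

theorem Finset.card_le_of_forall_le_norm_sub (F : Finset E) {δ t : ℝ} (hδ : 0 < δ) (ht : 0 ≤ t)
    (hsep : ∀ v ∈ F, ∀ w ∈ F, v ≠ w → δ ≤ ‖v - w‖) (hF : ∀ v ∈ F, ‖v‖ ≤ t) :
    (F.card : ℝ) ≤ ((2 * t + δ) / δ) ^ Module.finrank ℝ E := by
  borelize E
  set r := Module.finrank ℝ E
  let μ : Measure E := Measure.addHaar
  have hball (x : E) {ρ : ℝ} (hρ : 0 < ρ) :
      μ (ball x ρ) = ENNReal.ofReal (ρ ^ r) * μ (ball 0 1) :=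
    Measure.addHaar_ball_of_pos μ x hρ
  have hdisj : (F : Set E).PairwiseDisjoint (fun v => ball v (δ / 2)) := fun v hv w hw hvw =>
    ball_disjoint_ball (by rw [dist_eq_norm]; linarith [hsep v hv w hw hvw])
  have hsub : (⋃ v ∈ F, ball v (δ / 2)) ⊆ ball 0 (t + δ / 2) := by
    refine iUnion₂_subset fun v hv => ball_subset_ball' ?_
    rw [dist_zero_right]
    linarith [hF v hv]
  have hvol : (F.card : ℝ≥0∞) * ENNReal.ofReal ((δ / 2) ^ r) * μ (ball 0 1) ≤
      ENNReal.ofReal ((t + δ / 2) ^ r) * μ (ball 0 1) :=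
    calc (F.card : ℝ≥0∞) * ENNReal.ofReal ((δ / 2) ^ r) * μ (ball 0 1)
        = ∑ v ∈ F, μ (ball v (δ / 2)) := by simp [hball _ (half_pos hδ), mul_assoc]
      _ = μ (⋃ v ∈ F, ball v (δ / 2)) :=
          (measure_biUnion_finset hdisj fun _ _ => measurableSet_ball).symm
      _ ≤ _ := (measure_mono hsub).trans_eq (hball 0 (by positivity))
  rw [ENNReal.mul_le_mul_iff_left (measure_ball_pos μ _ one_pos).ne' measure_ball_lt_top.ne,
    ← ENNReal.ofReal_natCast, ← ENNReal.ofReal_mul (by positivity),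
    ENNReal.ofReal_le_ofReal_iff (by positivity), ← le_div_iff₀ (by positivity), ← div_pow] at hvol
  rwa [show (t + δ / 2) / (δ / 2) = (2 * t + δ) / δ by field_simp] at hvol

theorem Set.encard_le_of_forall_le_norm_sub (S : Set E) {δ t : ℝ} (hδ : 0 < δ) (ht : 0 ≤ t)
    (hsep : ∀ v ∈ S, ∀ w ∈ S, v ≠ w → δ ≤ ‖v - w‖) (hS : ∀ v ∈ S, ‖v‖ ≤ t) :
    (S.encard : ℝ≥0∞) ≤ ENNReal.ofReal (((2 * t + δ) / δ) ^ Module.finrank ℝ E) := by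
  set B := ((2 * t + δ) / δ) ^ Module.finrank ℝ E
  have hfin : S.Finite := by
    by_contra hinf
    obtain ⟨F, hFS, hcard⟩ := Set.Infinite.exists_subset_card_eq hinf (⌊B⌋₊ + 1)
    have := F.card_le_of_forall_le_norm_sub hδ ht (fun v hv w hw => hsep v (hFS hv) w (hFS hw))
      fun v hv => hS v (hFS hv)
    rw [hcard, Nat.cast_add_one] at this
    exact (Nat.lt_floor_add_one B).not_ge this
  lift S to Finset E using hfin
  rw [encard_coe_eq_coe_finsetCard, ENat.toENNReal_coe, ← ENNReal.ofReal_natCast]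
  exact ENNReal.ofReal_le_ofReal (S.card_le_of_forall_le_norm_sub hδ ht hsep hS)

theorem Submodule.encard_setOf_mem_norm_le_le (L : Submodule ℤ E) {δ t : ℝ} (hδ : 0 < δ)
    (ht : 0 ≤ t) (hmin : ∀ v ∈ L, v ≠ 0 → δ ≤ ‖v‖) :
    ({v | v ∈ L ∧ ‖v‖ ≤ t}.encard : ℝ≥0∞) ≤
      ENNReal.ofReal (((2 * t + δ) / δ) ^ Module.finrank ℝ E) :=
  Set.encard_le_of_forall_le_norm_sub _ hδ ht
    (fun _ hv _ hw hvw => hmin _ (L.sub_mem hv.1 hw.1) (sub_ne_zero.2 hvw)) fun _ hv => hv.2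

theorem Submodule.encard_compl_zero_norm_lt_le (L : Submodule ℤ E) {lam t : ℝ} (hlam : 0 < lam)
    (hmin : ∀ v ∈ L, v ≠ 0 → lam ≤ ‖v‖) (ht : lam ≤ t) :
    ({i : ↥({0}ᶜ : Set L) | ‖((i : L) : E)‖ < t}.encard : ℝ≥0∞) ≤
      ENNReal.ofReal ((3 * t / lam) ^ Module.finrank ℝ E) := by
  have ht0 : 0 < t := hlam.trans_le ht
  calc ({i : ↥({0}ᶜ : Set L) | ‖((i : L) : E)‖ < t}.encard : ℝ≥0∞)
      ≤ {v | v ∈ L ∧ ‖v‖ ≤ t}.encard := by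
        gcongr
        exact encard_le_encard_of_injOn (fun i hi => ⟨(i : L).2, le_of_lt hi⟩)
          (Subtype.val_injective.comp Subtype.val_injective).injOn
    _ ≤ ENNReal.ofReal (((2 * t + lam) / lam) ^ Module.finrank ℝ E) :=
        L.encard_setOf_mem_norm_le_le hlam ht0.le hmin
    _ ≤ ENNReal.ofReal ((3 * t / lam) ^ Module.finrank ℝ E) := by
        gcongr
        linarith

end Packing

theorem Submodule.exists_pos_forall_le_norm {E : Type*} [NormedAddCommGroup E]
    (L : Submodule ℤ E) [DiscreteTopology L] : ∃ ε > 0, ∀ v ∈ L, v ≠ 0 → ε ≤ ‖v‖ := by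
  obtain ⟨ε, hε, h⟩ := isOpen_singleton_iff.1 (isOpen_discrete ({0} : Set L))
  refine ⟨ε, hε, fun v hv hv0 => not_lt.1 fun hlt => hv0 ?_⟩
  simpa using h ⟨v, hv⟩ (by simpa [Subtype.dist_eq] using hlt)

section ZLattice

variable {E : Type*} [NormedAddCommGroup E] [NormedSpace ℝ E] [Nontrivial E]
  (L : Submodule ℤ E) [DiscreteTopology L] [IsZLattice ℝ L]

theorem IsZLattice.exists_mem_ne_zero : ∃ v ∈ L, v ≠ 0 := by
  by_contra! h
  have : Submodule.span ℝ (L : Set E) = ⊥ := Submodule.span_eq_bot.2 h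
  exact bot_ne_top (this.symm.trans (IsZLattice.span_top (K := ℝ)))

theorem IsZLattice.sInf_norm_pos : 0 < sInf ((fun v : E => ‖v‖) '' {v : E | v ∈ L ∧ v ≠ 0}) := by
  obtain ⟨v, hv, hv0⟩ := IsZLattice.exists_mem_ne_zero L
  obtain ⟨ε, hε, hmin⟩ := L.exists_pos_forall_le_norm
  refine hε.trans_le (le_csInf ⟨‖v‖, v, ⟨hv, hv0⟩, rfl⟩ ?_)
  rintro _ ⟨w, ⟨hw, hw0⟩, rfl⟩
  exact hmin w hw hw0

end ZLattice

theorem integrable_two_pi_mul_mul_exp_neg_pi_mul_sq :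
    Integrable fun t : ℝ => 2 * π * t * exp (-π * t ^ 2) := by
  simpa only [mul_assoc] using (integrable_mul_exp_neg_mul_sq pi_pos).const_mul (2 * π)

theorem integrable_pow_mul_exp_neg_pi_mul_sq (n : ℕ) :
    Integrable fun t : ℝ => t ^ n * exp (-π * t ^ 2) := by
  simpa only [rpow_natCast] using
    integrable_rpow_mul_exp_neg_mul_sq pi_pos (s := n) (by linarith [n.cast_nonneg (α := ℝ)])

theorem integral_Ioi_two_pi_mul_mul_exp_neg_pi_mul_sq (a : ℝ) :
    ∫ t in Ioi a, 2 * π * t * exp (-π * t ^ 2) = exp (-π * a ^ 2) := by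
  have hderiv (t : ℝ) :
      HasDerivAt (fun t => -exp (-π * t ^ 2)) (2 * π * t * exp (-π * t ^ 2)) t :=
    (((hasDerivAt_pow 2 t).const_mul (-π)).exp).neg.congr_deriv (by norm_num; ring)
  have hlim : Filter.Tendsto (fun t => -exp (-π * t ^ 2)) Filter.atTop (nhds 0) := by
    simpa using (tendsto_exp_neg_atTop_nhds_zero.comp
      ((Filter.tendsto_pow_atTop two_ne_zero).const_mul_atTop pi_pos)).neg
  rw [integral_Ioi_of_hasDerivAt_of_tendsto' (fun t _ => hderiv t)
    integrable_two_pi_mul_mul_exp_neg_pi_mul_sq.integrableOn hlim]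
  ring

theorem integral_comp_pi_mul_sq_Ioi {a : ℝ} (ha : 0 ≤ a) (φ : ℝ → ℝ) :
    ∫ t in Ioi a, 2 * π * t * φ (π * t ^ 2) = ∫ u in Ioi (π * a ^ 2), φ u := by
  have hmono : StrictMonoOn (fun t : ℝ => π * t ^ 2) (Ioi a) := fun s hs t _ hst => by
    have : 0 ≤ s := ha.trans (le_of_lt hs)
    dsimp only
    gcongr
  have himage : (fun t : ℝ => π * t ^ 2) '' Ioi a = Ioi (π * a ^ 2) := by
    ext u
    constructor
    · rintro ⟨t, ht, rfl⟩
      exact mem_Ioi.2 (by dsimp only; have := mem_Ioi.1 ht; gcongr)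
    · intro hu
      have hu' : a ^ 2 < u / π := by rw [lt_div_iff₀ pi_pos]; linarith [mem_Ioi.1 hu]
      refine ⟨√(u / π), (lt_sqrt ha).2 hu', ?_⟩
      dsimp only
      rw [sq_sqrt ((sq_nonneg a).trans hu'.le), mul_div_cancel₀ _ pi_pos.ne']
  have hderiv (t : ℝ) (_ : t ∈ Ioi a) :
      HasDerivWithinAt (fun t : ℝ => π * t ^ 2) (2 * π * t) (Ioi a) t :=
    (((hasDerivAt_pow 2 t).const_mul π).congr_deriv (by norm_num; ring)).hasDerivWithinAt
  rw [← himage, integral_image_eq_integral_abs_deriv_smul measurableSet_Ioi hderiv hmono.injOn]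
  refine setIntegral_congr_fun measurableSet_Ioi fun t ht => ?_
  have : 0 ≤ t := ha.trans (le_of_lt ht)
  rw [smul_eq_mul, abs_of_nonneg (by positivity)]

theorem groenewegen_const_eq_integral {lam : ℝ} (hlam : 0 < lam) (r : ℕ) :
    3 ^ r * (π * lam ^ 2) ^ (-(r : ℝ) / 2) *
        ∫ u in Ioi (π * lam ^ 2), u ^ ((r : ℝ) / 2) * exp (-u) =
      ∫ t in Ioi lam, (3 * t / lam) ^ r * (2 * π * t * exp (-π * t ^ 2)) := by
  rw [← integral_comp_pi_mul_sq_Ioi hlam.le, ← integral_const_mul]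
  refine setIntegral_congr_fun measurableSet_Ioi fun t ht => ?_
  have ht0 : 0 < t := hlam.trans ht
  have hscale : (π * lam ^ 2) ^ (-(r : ℝ) / 2) * (π * t ^ 2) ^ ((r : ℝ) / 2) = (t / lam) ^ r := by
    rw [neg_div, rpow_neg (by positivity), inv_mul_eq_div,
      ← div_rpow (by positivity) (by positivity),
      show π * t ^ 2 / (π * lam ^ 2) = (t / lam) ^ 2 by field_simp, ← rpow_natCast (t / lam) 2,
      ← rpow_mul (by positivity), ← rpow_natCast]
    congr 1
    push_cast
    ring
  rw [mul_div_assoc, mul_pow, ← hscale, neg_mul]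
  ring

theorem tsum_ofReal_exp_neg_pi_mul_sq_eq_lintegral {ι : Type*} [Countable ι] (x : ι → ℝ) {a : ℝ}
    (ha : 0 ≤ a) (hx : ∀ i, a ≤ x i) :
    ∑' i, ENNReal.ofReal (exp (-π * x i ^ 2)) =
      ∫⁻ t in Ioi a, {i | x i < t}.encard * ENNReal.ofReal (2 * π * t * exp (-π * t ^ 2)) := by
  set g : ℝ → ℝ≥0∞ := fun t => ENNReal.ofReal (2 * π * t * exp (-π * t ^ 2))
  have hterm (i : ι) :
      ENNReal.ofReal (exp (-π * x i ^ 2)) = ∫⁻ t in Ioi a, (Ioi (x i)).indicator g t := by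
    have hnonneg : 0 ≤ᵐ[volume.restrict (Ioi (x i))] fun t => 2 * π * t * exp (-π * t ^ 2) := by
      refine (ae_restrict_iff' measurableSet_Ioi).2 (ae_of_all _ fun t ht => ?_)
      have : 0 ≤ t := ha.trans ((hx i).trans (le_of_lt ht))
      positivity
    rw [lintegral_indicator measurableSet_Ioi, Measure.restrict_restrict measurableSet_Ioi,
      inter_eq_self_of_subset_left (Ioi_subset_Ioi (hx i)),
      ← ofReal_integral_eq_lintegral_ofReal
        integrable_two_pi_mul_mul_exp_neg_pi_mul_sq.integrableOn hnonneg,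
      integral_Ioi_two_pi_mul_mul_exp_neg_pi_mul_sq]
  have hmeas (i : ι) : Measurable ((Ioi (x i)).indicator g) :=
    (by fun_prop : Measurable g).indicator measurableSet_Ioi
  simp_rw [hterm]
  rw [← lintegral_tsum fun i => (hmeas i).aemeasurable]
  congr with t
  rw [← ENNReal.tsum_set_const, tsum_subtype {i | x i < t} fun _ => g t]
  rfl

theorem tsum_ofReal_exp_neg_pi_mul_norm_sq_le {E : Type*} [NormedAddCommGroup E]
    [NormedSpace ℝ E] [FiniteDimensional ℝ E] (L : Submodule ℤ E) [Countable L] {lam : ℝ}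
    (hlam : 0 < lam) (hmin : ∀ v ∈ L, v ≠ 0 → lam ≤ ‖v‖) :
    ∑' v : L, ENNReal.ofReal (exp (-π * ‖(v : E)‖ ^ 2)) ≤ 1 + ENNReal.ofReal
      (∫ t in Ioi lam, (3 * t / lam) ^ Module.finrank ℝ E * (2 * π * t * exp (-π * t ^ 2))) := by
  set r := Module.finrank ℝ E
  set g : ℝ → ℝ := fun t => (3 * t / lam) ^ r * (2 * π * t * exp (-π * t ^ 2))
  have hg_nonneg : ∀ t ∈ Ioi lam, 0 ≤ g t := fun t ht => by
    have : 0 < t := hlam.trans ht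
    positivity
  have hg_int : IntegrableOn g (Ioi lam) :=
    ((integrable_pow_mul_exp_neg_pi_mul_sq (r + 1)).const_mul
      ((3 / lam) ^ r * (2 * π))).integrableOn.congr_fun (fun t _ => by simp only [g]; ring)
      measurableSet_Ioi
  calc ∑' v : L, ENNReal.ofReal (exp (-π * ‖(v : E)‖ ^ 2))
      = 1 + ∑' i : ↥({0}ᶜ : Set L), ENNReal.ofReal (exp (-π * ‖((i : L) : E)‖ ^ 2)) := by
        rw [← ENNReal.summable.tsum_add_tsum_compl (s := {0}) ENNReal.summable,
          tsum_singleton (0 : L) fun v : L => ENNReal.ofReal (exp (-π * ‖(v : E)‖ ^ 2))]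
        simp
    _ = 1 + ∫⁻ t in Ioi lam, {i : ↥({0}ᶜ : Set L) | ‖((i : L) : E)‖ < t}.encard *
          ENNReal.ofReal (2 * π * t * exp (-π * t ^ 2)) := by
        rw [tsum_ofReal_exp_neg_pi_mul_sq_eq_lintegral
          (fun i : ↥({0}ᶜ : Set L) => ‖((i : L) : E)‖) hlam.le
          fun i => hmin _ (i : L).2 fun h => i.2 (Subtype.ext h)]
    _ ≤ 1 + ∫⁻ t in Ioi lam, ENNReal.ofReal (g t) := by
        gcongr 1 + ?_
        refine setLIntegral_mono' measurableSet_Ioi fun t ht => ?_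
        calc _ ≤ ENNReal.ofReal ((3 * t / lam) ^ r) *
              ENNReal.ofReal (2 * π * t * exp (-π * t ^ 2)) := by
              gcongr
              exact L.encard_compl_zero_norm_lt_le hlam hmin (le_of_lt ht)
          _ = ENNReal.ofReal (g t) :=
              (ENNReal.ofReal_mul (by have := hlam.trans ht; positivity)).symm
    _ = 1 + ENNReal.ofReal (∫ t in Ioi lam, g t) := by
        rw [ofReal_integral_eq_lintegral_ofReal hg_int
          ((ae_restrict_iff' measurableSet_Ioi).2 (ae_of_all _ hg_nonneg))]

theorem Real.log_tsum_le_of_tsum_ofReal_le {ι : Type*} {f : ι → ℝ} (hf : ∀ i, 0 ≤ f i) {i₀ : ι}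
    (hi₀ : f i₀ = 1) {B : ℝ} (hB : 0 ≤ B)
    (h : ∑' i, ENNReal.ofReal (f i) ≤ 1 + ENNReal.ofReal B) :
    log (∑' i, f i) ≤ B := by
  have hne : ∑' i, ENNReal.ofReal (f i) ≠ ∞ := ne_top_of_le_ne_top (by simp) h
  have hsum : Summable f := by
    simpa only [ENNReal.toReal_ofReal (hf _)] using ENNReal.summable_toReal hne
  have hle : ∑' i, f i ≤ 1 + B := by
    rw [show ∑' i, f i = (∑' i, ENNReal.ofReal (f i)).toReal by
      simp only [ENNReal.tsum_toReal_eq fun _ => ENNReal.ofReal_ne_top,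
        ENNReal.toReal_ofReal (hf _)]]
    refine ENNReal.toReal_le_of_le_ofReal (by positivity) (h.trans_eq ?_)
    rw [ENNReal.ofReal_add zero_le_one hB, ENNReal.ofReal_one]
  have hge : 1 ≤ ∑' i, f i := hi₀ ▸ hsum.le_tsum i₀ fun j _ => hf j
  linarith [log_le_sub_one_of_pos (zero_lt_one.trans_le hge)]

/-- Groenewegen's bound: for a ℤ-lattice `L` of rank `r ≥ 1` with first minimum `λ₁`,
`h⁰_θ(L) ≤ C(r, λ₁) = 3^r (π λ₁²)^{-r/2} ∫_{πλ₁²}^∞ u^{r/2} e^{-u} du`. -/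
theorem theta_le_groenewegen {E : Type*} [NormedAddCommGroup E] [InnerProductSpace ℝ E]
    [FiniteDimensional ℝ E] (L : Submodule ℤ E) [DiscreteTopology L] [IsZLattice ℝ L]
    (hr : 1 ≤ Module.finrank ℝ E) (lam : ℝ)
    (hlam : lam = sInf ((fun v : E => ‖v‖) '' {v : E | v ∈ L ∧ v ≠ 0})) :
    Real.log (∑' v : L, Real.exp (-π * ‖(v : E)‖ ^ 2)) ≤
      3 ^ Module.finrank ℝ E * (π * lam ^ 2) ^ (-(Module.finrank ℝ E : ℝ) / 2) *
        ∫ u in Set.Ioi (π * lam ^ 2), u ^ ((Module.finrank ℝ E : ℝ) / 2) * Real.exp (-u) := by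
  have : Nontrivial E := Module.nontrivial_of_finrank_pos hr
  have hlam0 : 0 < lam := hlam ▸ IsZLattice.sInf_norm_pos L
  have hmin : ∀ v ∈ L, v ≠ 0 → lam ≤ ‖v‖ := fun v hv hv0 =>
    hlam ▸ csInf_le ⟨0, by rintro _ ⟨w, -, rfl⟩; exact norm_nonneg w⟩ ⟨v, ⟨hv, hv0⟩, rfl⟩
  rw [groenewegen_const_eq_integral hlam0]
  refine log_tsum_le_of_tsum_ofReal_le (fun _ => (exp_pos _).le) (i₀ := 0) (by simp) ?_
    (tsum_ofReal_exp_neg_pi_mul_norm_sq_le L hlam0 hmin)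
  refine setIntegral_nonneg measurableSet_Ioi fun t ht => ?_
  have : 0 < t := hlam0.trans ht
  positivity
end

section
/- Let (E_n)_{n ∈ ℕ} be a sequence of finite-dimensional real inner product spaces and, for each n, let L_n ⊆ E_n be a nonzero ℤ-lattice. Suppose there exist constants C, C₃, A, A₃ > 0 and a real number τ with 0 < τ < 1 such that for all n: rank(L_n) ≤ C₃ · e^{A₃√n} and λ₁(L_n) ≥ C · e^{−A√n} · τ^{−n}. Then there exists N ∈ ℕ such that for all n ≥ N, h⁰_θ(L_n) ≤ 2 · 3^{C₃ e^{A₃√n}} · exp(−π C² e^{−2A√n} τ^{−2n}). -/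
/-!
Nonzero vectors of a lattice `L` with `λ₁(L) ≥ m` are `m`-separated, so comparing volumes of
disjoint balls shows that at most `(1 + 2R/m)^r` of them have norm `≤ R`, where `r` is the rank.
Cut `{‖v‖ ≥ m}` into shells `m + k/(2m) ≤ ‖v‖ < m + (k+1)/(2m)`: when `r ≤ m²` the `k`-th shell
holds at most `3^r e^{(k+1)/3}` points, each contributing at most `e^{-πm²} e^{-πk}`, and the
geometric series gives `∑_{v ≠ 0} e^{-π‖v‖²} ≤ 2 · 3^r e^{-πm²}`; then `log (1 + x) ≤ x`.
For the sequence, `m² = C² e^{-2A√n} τ^{-2n}` eventually dominates `C₃ e^{A₃√n} ≥ r`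
because `√n = o(n)`.
-/

open Real MeasureTheory Metric Set Finset Filter Module
open scoped ENNReal

theorem sum_range_exp_succ_div_three_sub_pi_mul_le_two (n : ℕ) :
    ∑ k ∈ range n, exp ((k + 1) / 3 - π * k) ≤ 2 := by
  have hq : exp (1 / 3 - π) ≤ 1 / 4 := by
    have h2 : (2 : ℝ) ≤ exp 1 := by linarith [add_one_le_exp 1]
    calc exp (1 / 3 - π) ≤ exp (-2) := exp_le_exp.mpr (by linarith [pi_gt_three])
      _ = 1 / exp 1 ^ 2 := by rw [exp_neg, ← exp_nat_mul]; norm_num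
      _ ≤ 1 / 4 := by gcongr; nlinarith
  have he : exp (1 / 3) ≤ 3 / 2 := by
    refine le_of_pow_le_pow_left₀ three_ne_zero (by norm_num) ?_
    rw [← exp_nat_mul]
    norm_num
    linarith [exp_one_lt_d9]
  calc ∑ k ∈ range n, exp ((k + 1) / 3 - π * k)
      = exp (1 / 3) * ∑ k ∈ Ico 0 n, exp (1 / 3 - π) ^ k := by
        rw [range_eq_Ico, mul_sum]
        refine sum_congr rfl fun k _ => ?_
        rw [← exp_nat_mul, ← exp_add]
        ring_nf
    _ ≤ 3 / 2 * (exp (1 / 3 - π) ^ 0 / (1 - exp (1 / 3 - π))) := by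
        gcongr
        exact geom_sum_Ico_le_of_lt_one (exp_pos _).le (by linarith)
    _ ≤ 3 / 2 * (1 / (1 - 1 / 4)) := by
        rw [pow_zero]
        gcongr
    _ = 2 := by norm_num

section

variable {E : Type*} [NormedAddCommGroup E] [NormedSpace ℝ E] [FiniteDimensional ℝ E]

theorem Finset.card_le_of_pairwise_le_dist {s : Finset E} {m R : ℝ} (hm : 0 < m) (hR : 0 ≤ R)
    (hsep : (s : Set E).Pairwise fun x y => m ≤ dist x y) (hs : ∀ x ∈ s, ‖x‖ ≤ R) :
    (#s : ℝ) ≤ (1 + 2 * R / m) ^ finrank ℝ E := by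
  borelize E
  set μ : Measure E := Measure.addHaar
  set d := finrank ℝ E
  have hdisj : (s : Set E).PairwiseDisjoint (ball · (m / 2)) := fun x hx y hy hxy =>
    ball_disjoint_ball (by linarith [hsep hx hy hxy])
  have hsub : ⋃ x ∈ s, ball x (m / 2) ⊆ ball 0 (R + m / 2) :=
    iUnion₂_subset fun x hx => ball_subset_ball' (by rw [dist_zero_right]; linarith [hs x hx])
  have hvol : (#s : ℝ≥0∞) * ENNReal.ofReal ((m / 2) ^ d) * μ (ball 0 1) ≤
      ENNReal.ofReal ((R + m / 2) ^ d) * μ (ball 0 1) :=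
    calc _ = ∑ x ∈ s, μ (ball x (m / 2)) := by
          simp [Measure.addHaar_ball_of_pos μ _ (half_pos hm), mul_assoc, d]
      _ = μ (⋃ x ∈ s, ball x (m / 2)) :=
          (measure_biUnion_finset hdisj fun _ _ => measurableSet_ball).symm
      _ ≤ μ (ball 0 (R + m / 2)) := measure_mono hsub
      _ = _ := Measure.addHaar_ball_of_pos μ _ (by positivity)
  rw [ENNReal.mul_le_mul_iff_left (measure_ball_pos μ 0 one_pos).ne' measure_ball_lt_top.ne,
    ← ENNReal.ofReal_natCast, ← ENNReal.ofReal_mul (by positivity),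
    ENNReal.ofReal_le_ofReal_iff (by positivity), ← le_div_iff₀ (by positivity), ← div_pow] at hvol
  rwa [show (R + m / 2) / (m / 2) = 1 + 2 * R / m by field_simp; ring] at hvol

theorem Finset.sum_exp_neg_pi_norm_sq_le_of_shell {s : Finset E} {m : ℝ} (k : ℕ) (hm : 0 < m)
    (hd : (finrank ℝ E : ℝ) ≤ m ^ 2) (hsep : (s : Set E).Pairwise fun x y => m ≤ dist x y)
    (hlow : ∀ x ∈ s, m + k / (2 * m) ≤ ‖x‖) (hup : ∀ x ∈ s, ‖x‖ ≤ m + (k + 1) / (2 * m)) :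
    ∑ x ∈ s, exp (-π * ‖x‖ ^ 2) ≤
      3 ^ finrank ℝ E * exp (-π * m ^ 2) * exp ((k + 1) / 3 - π * k) := by
  set d := finrank ℝ E
  have hcard : (#s : ℝ) ≤ 3 ^ d * exp ((k + 1) / 3) :=
    calc (#s : ℝ) ≤ (1 + 2 * (m + (k + 1) / (2 * m)) / m) ^ d :=
          card_le_of_pairwise_le_dist hm (by positivity) hsep hup
      _ = (3 * ((k + 1) / (3 * m ^ 2) + 1)) ^ d := by congr 1; field_simp; ring
      _ ≤ (3 * exp ((k + 1) / (3 * m ^ 2))) ^ d := by gcongr; exact add_one_le_exp _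
      _ = 3 ^ d * exp (d * ((k + 1) / (3 * m ^ 2))) := by rw [mul_pow, exp_nat_mul]
      _ ≤ 3 ^ d * exp ((k + 1) / 3) := by
          gcongr
          rw [mul_div_assoc', div_le_div_iff₀ (by positivity) (by norm_num)]
          nlinarith [(by positivity : (0 : ℝ) ≤ k + 1)]
  have hterm : ∀ x ∈ s, exp (-π * ‖x‖ ^ 2) ≤ exp (-π * m ^ 2) * exp (-π * k) := by
    intro x hx
    rw [← exp_add, exp_le_exp]
    have hsq : m ^ 2 + k ≤ ‖x‖ ^ 2 :=
      calc m ^ 2 + k ≤ (m + k / (2 * m)) ^ 2 := by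
            field_simp; nlinarith [(by positivity : (0 : ℝ) ≤ k)]
        _ ≤ ‖x‖ ^ 2 := by gcongr; exact hlow x hx
    nlinarith [pi_pos]
  calc ∑ x ∈ s, exp (-π * ‖x‖ ^ 2) ≤ #s * (exp (-π * m ^ 2) * exp (-π * k)) := by
        simpa using sum_le_card_nsmul s _ _ hterm
    _ ≤ 3 ^ d * exp ((k + 1) / 3) * (exp (-π * m ^ 2) * exp (-π * k)) := by gcongr
    _ = _ := by rw [sub_eq_add_neg, exp_add, ← neg_mul]; ring

theorem Finset.sum_exp_neg_pi_norm_sq_le_of_pairwise_le_dist {s : Finset E} {m : ℝ} (hm : 0 < m)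
    (hd : (finrank ℝ E : ℝ) ≤ m ^ 2) (hsep : (s : Set E).Pairwise fun x y => m ≤ dist x y)
    (hs : ∀ x ∈ s, m ≤ ‖x‖) :
    ∑ x ∈ s, exp (-π * ‖x‖ ^ 2) ≤ 2 * 3 ^ finrank ℝ E * exp (-π * m ^ 2) := by
  set shell : E → ℕ := fun x => ⌊2 * m * (‖x‖ - m)⌋₊
  have hmaps : ∀ x ∈ s, shell x ∈ range (s.sup shell + 1) := fun x hx =>
    mem_range_succ_iff.mpr (le_sup hx)
  rw [← sum_fiberwise_of_maps_to hmaps]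
  calc ∑ k ∈ range (s.sup shell + 1), ∑ x ∈ s with shell x = k, exp (-π * ‖x‖ ^ 2)
      ≤ ∑ k ∈ range (s.sup shell + 1),
          3 ^ finrank ℝ E * exp (-π * m ^ 2) * exp ((k + 1) / 3 - π * k) := by
        gcongr with k
        refine sum_exp_neg_pi_norm_sq_le_of_shell k hm hd
          (hsep.mono (coe_subset.mpr (filter_subset _ _))) ?_ ?_
        all_goals
          intro x hx
          obtain ⟨hxs, rfl⟩ := mem_filter.mp hx
          have h2m : 0 < 2 * m := by positivity
        · have : (shell x : ℝ) ≤ 2 * m * (‖x‖ - m) :=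
            Nat.floor_le (mul_nonneg h2m.le (sub_nonneg.mpr (hs x hxs)))
          rw [← le_sub_iff_add_le', div_le_iff₀ h2m]
          linarith
        · have : 2 * m * (‖x‖ - m) < shell x + 1 := Nat.lt_floor_add_one _
          rw [← sub_le_iff_le_add', le_div_iff₀ h2m]
          linarith
    _ = 3 ^ finrank ℝ E * exp (-π * m ^ 2) * ∑ k ∈ range (s.sup shell + 1),
          exp ((k + 1) / 3 - π * k) := by rw [mul_sum]
    _ ≤ 2 * 3 ^ finrank ℝ E * exp (-π * m ^ 2) := by
        nlinarith [sum_range_exp_succ_div_three_sub_pi_mul_le_two (s.sup shell + 1),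
          (by positivity : (0 : ℝ) ≤ 3 ^ finrank ℝ E * exp (-π * m ^ 2))]

namespace Submodule

variable (L : Submodule ℤ E) {m : ℝ}

theorem sum_exp_neg_pi_norm_sq_le (hm : 0 < m) (hd : (finrank ℝ E : ℝ) ≤ m ^ 2)
    (hL : ∀ v ∈ L, v ≠ 0 → m ≤ ‖v‖) (u : Finset L) :
    ∑ v ∈ u, exp (-π * ‖(v : E)‖ ^ 2) ≤ 1 + 2 * 3 ^ finrank ℝ E * exp (-π * m ^ 2) := by
  classical
  have hsep : ((u.erase 0).map (Function.Embedding.subtype _) : Set E).Pairwise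
      fun x y => m ≤ dist x y := by
    rintro _ hx _ hy hxy
    obtain ⟨v, -, rfl⟩ := Finset.mem_map.mp (mem_coe.mp hx)
    obtain ⟨w, -, rfl⟩ := Finset.mem_map.mp (mem_coe.mp hy)
    rw [dist_eq_norm]
    exact hL _ (L.sub_mem v.2 w.2) (sub_ne_zero.mpr hxy)
  have hnorm : ∀ x ∈ (u.erase 0).map (Function.Embedding.subtype _), m ≤ ‖x‖ := by
    intro _ hx
    obtain ⟨v, hv, rfl⟩ := Finset.mem_map.mp hx
    exact hL v v.2 (by simpa using ne_of_mem_erase hv)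
  calc ∑ v ∈ u, exp (-π * ‖(v : E)‖ ^ 2) ≤ ∑ v ∈ insert 0 u, exp (-π * ‖(v : E)‖ ^ 2) :=
        sum_le_sum_of_subset_of_nonneg (subset_insert _ _) fun _ _ _ => (exp_pos _).le
    _ = 1 + ∑ x ∈ (u.erase 0).map (Function.Embedding.subtype _), exp (-π * ‖x‖ ^ 2) := by
        rw [← add_sum_erase _ _ (mem_insert_self 0 u), erase_insert_eq_erase, sum_map]
        simp
    _ ≤ _ := by
        gcongr
        exact sum_exp_neg_pi_norm_sq_le_of_pairwise_le_dist hm hd hsep hnorm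

theorem log_tsum_exp_neg_pi_norm_sq_le (hm : 0 < m) (hd : (finrank ℝ E : ℝ) ≤ m ^ 2)
    (hL : ∀ v ∈ L, v ≠ 0 → m ≤ ‖v‖) :
    log (∑' v : L, exp (-π * ‖(v : E)‖ ^ 2)) ≤ 2 * 3 ^ finrank ℝ E * exp (-π * m ^ 2) := by
  have hnonneg : 0 ≤ fun v : L => exp (-π * ‖(v : E)‖ ^ 2) := fun _ => (exp_pos _).le
  have hsum := L.sum_exp_neg_pi_norm_sq_le hm hd hL
  have hsummable := summable_of_sum_le hnonneg hsum
  have hone : 1 ≤ ∑' v : L, exp (-π * ‖(v : E)‖ ^ 2) := by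
    simpa using hsummable.le_tsum 0 fun v _ => hnonneg v
  linarith [log_le_sub_one_of_pos (by linarith : (0 : ℝ) < _),
    hsummable.tsum_le_of_sum_le hsum]

end Submodule

end

theorem eventually_add_mul_sqrt_le_mul {l : ℝ} (hl : 0 < l) (a c : ℝ) :
    ∀ᶠ n : ℕ in atTop, c + a * √n ≤ l * n := by
  have hsqrt : Tendsto (fun n : ℕ => √(n : ℝ)) atTop atTop :=
    tendsto_sqrt_atTop.comp tendsto_natCast_atTop_atTop
  have hgrowth : Tendsto (fun n : ℕ => √(n : ℝ) * (l * √n - a)) atTop atTop :=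
    hsqrt.atTop_mul_atTop₀ (tendsto_atTop_add_const_right _ (-a) (hsqrt.const_mul_atTop hl))
  filter_upwards [hgrowth.eventually_ge_atTop c] with n hn
  nlinarith [mul_self_sqrt (Nat.cast_nonneg (α := ℝ) n)]

theorem theta_eventually_bounded_general (E : ℕ → Type*) [∀ n, NormedAddCommGroup (E n)]
    [∀ n, InnerProductSpace ℝ (E n)] [∀ n, FiniteDimensional ℝ (E n)]
    (L : ∀ n, Submodule ℤ (E n))
    (C C₃ A A₃ : ℝ) (hC : 0 < C) (hC₃ : 0 < C₃)
    (τ : ℝ) (hτ0 : 0 < τ) (hτ1 : τ < 1)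
    (hrank : ∀ n : ℕ, (Module.finrank ℝ (E n) : ℝ) ≤ C₃ * Real.exp (A₃ * Real.sqrt n))
    (hmin : ∀ n : ℕ, C * Real.exp (-A * Real.sqrt n) * (1 / τ) ^ n ≤
      sInf ((fun v : E n => ‖v‖) '' {v : E n | v ∈ L n ∧ v ≠ 0})) :
    ∃ N : ℕ, ∀ n : ℕ, N ≤ n →
      Real.log (∑' v : L n, Real.exp (-π * ‖(v : E n)‖ ^ 2)) ≤
        2 * (3 : ℝ) ^ (C₃ * Real.exp (A₃ * Real.sqrt n)) *
          Real.exp (-π * C ^ 2 * Real.exp (-2 * A * Real.sqrt n) * (1 / τ) ^ (2 * n)) := by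
  have hl : 0 < 2 * log (1 / τ) := by
    have := log_pos (one_lt_one_div hτ0 hτ1)
    positivity
  obtain ⟨N, hN⟩ := eventually_atTop.mp
    (eventually_add_mul_sqrt_le_mul hl (A₃ + 2 * A) (log C₃ - 2 * log C))
  refine ⟨N, fun n hn => ?_⟩
  set m := C * exp (-A * √n) * (1 / τ) ^ n
  have hm : 0 < m := by positivity
  have hm_exp : m = exp (log C + -A * √n + n * log (1 / τ)) := by
    rw [exp_add, exp_add, exp_log hC, exp_nat_mul, exp_log (by positivity)]
  have hm_sq : -π * C ^ 2 * exp (-2 * A * √n) * (1 / τ) ^ (2 * n) = -π * m ^ 2 := by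
    rw [pow_mul', show -2 * A * √n = -A * √n + -A * √n by ring, exp_add]
    ring
  have hrank_le : C₃ * exp (A₃ * √n) ≤ m ^ 2 :=
    calc C₃ * exp (A₃ * √n) = exp (log C₃ + A₃ * √n) := by rw [exp_add, exp_log hC₃]
      _ ≤ exp ((log C + -A * √n + n * log (1 / τ)) + (log C + -A * √n + n * log (1 / τ))) :=
          exp_le_exp.mpr (by linarith [hN n hn])
      _ = m ^ 2 := by rw [exp_add, ← hm_exp, sq]
  have hnorm : ∀ v ∈ L n, v ≠ 0 → m ≤ ‖v‖ := fun v hv hv0 =>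
    (hmin n).trans (csInf_le ⟨0, by rintro _ ⟨w, -, rfl⟩; exact norm_nonneg w⟩ ⟨v, ⟨hv, hv0⟩, rfl⟩)
  have hpow : (3 : ℝ) ^ finrank ℝ (E n) ≤ 3 ^ (C₃ * exp (A₃ * √n)) := by
    rw [← rpow_natCast]
    exact rpow_le_rpow_of_exponent_le (by norm_num) (hrank n)
  rw [hm_sq]
  calc log (∑' v : L n, exp (-π * ‖(v : E n)‖ ^ 2))
      ≤ 2 * 3 ^ finrank ℝ (E n) * exp (-π * m ^ 2) :=
        (L n).log_tsum_exp_neg_pi_norm_sq_le hm ((hrank n).trans hrank_le) hnorm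
    _ ≤ _ := by gcongr

/-- If a sequence of nonzero ℤ-lattices `L n` satisfies `rank(L n) ≤ C₃ e^{A₃ √n}` and
`λ₁(L n) ≥ C e^{-A √n} τ^{-n}` with `0 < τ < 1`, then eventually
`h⁰_θ(L n) ≤ 2 · 3^{C₃ e^{A₃√n}} · exp(-π C² e^{-2A√n} τ^{-2n})`. -/
theorem theta_eventually_bounded (E : ℕ → Type*) [∀ n, NormedAddCommGroup (E n)]
    [∀ n, InnerProductSpace ℝ (E n)] [∀ n, FiniteDimensional ℝ (E n)]
    (L : ∀ n, Submodule ℤ (E n)) [∀ n, DiscreteTopology (L n)] [∀ n, IsZLattice ℝ (L n)]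
    (hL : ∀ n, L n ≠ ⊥)
    (C C₃ A A₃ : ℝ) (hC : 0 < C) (hC₃ : 0 < C₃) (hA : 0 < A) (hA₃ : 0 < A₃)
    (τ : ℝ) (hτ0 : 0 < τ) (hτ1 : τ < 1)
    (hrank : ∀ n : ℕ, (Module.finrank ℝ (E n) : ℝ) ≤ C₃ * Real.exp (A₃ * Real.sqrt n))
    (hmin : ∀ n : ℕ, C * Real.exp (-A * Real.sqrt n) * (1 / τ) ^ n ≤
      sInf ((fun v : E n => ‖v‖) '' {v : E n | v ∈ L n ∧ v ≠ 0})) :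
    ∃ N : ℕ, ∀ n : ℕ, N ≤ n →
      Real.log (∑' v : L n, Real.exp (-π * ‖(v : E n)‖ ^ 2)) ≤
        2 * (3 : ℝ) ^ (C₃ * Real.exp (A₃ * Real.sqrt n)) *
          Real.exp (-π * C ^ 2 * Real.exp (-2 * A * Real.sqrt n) * (1 / τ) ^ (2 * n)) :=
  theta_eventually_bounded_general E L C C₃ A A₃ hC hC₃ τ hτ0 hτ1 hrank hmin
end

section
/- (Analytic core of the main theta-finiteness theorem.) Let (E_n)_{n ∈ ℕ} be a sequence of finite-dimensional real inner product spaces and, for each n, let L_n ⊆ E_n be a nonzero ℤ-lattice. Suppose there exist constants C, C₃, A, A₃ > 0 and a real number τ with 0 < τ < 1 such that for all n: rank(L_n) ≤ C₃ · e^{A₃√n} and λ₁(L_n) ≥ C · e^{−A√n} · τ^{−n}. Then the series ∑_{n ≥ 0} h⁰_θ(L_n) converges, where each term h⁰_θ(L_n) = log ∑_{v ∈ L_n} exp(−π‖v‖²) is a nonnegative real number. -/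
/-!
If every nonzero vector of `L` has norm at least `δ`, then `L` is `δ`-separated, so packing disjoint
balls of radius `δ/2` shows that the shell `kδ ≤ ‖v‖ < (k+1)δ` holds at most `(2k+3)^d` lattice
points, `d` the dimension. Once `2d ≤ δ²` the Gaussian weight `exp(-π k²δ²)` beats this count, the
shell contributes at most `exp(-δ²)^k`, and so `1 ≤ θ(L) ≤ (1 - exp(-δ²))⁻¹`, i.e.
`h⁰_θ(L) = O(exp(-δ²))`. For `δₙ = C e^{-A√n} τ^{-n}` the square `δₙ²` grows like `τ^{-2n}` up to
a factor `e^{O(√n)}`, so it eventually dominates both `2C₃ e^{A₃√n} ≥ 2 dim Eₙ` and `n log τ⁻¹`;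
hence `h⁰_θ(Lₙ) = O(τⁿ)`.
-/

open scoped ENNReal
open Real Filter MeasureTheory Metric Finset Module

theorem Finset.card_mul_pow_le_of_pairwise_le_dist {V : Type*} [NormedAddCommGroup V]
    [NormedSpace ℝ V] [FiniteDimensional ℝ V] {s : Finset V} {δ R : ℝ} (hδ : 0 < δ)
    (hR : 0 ≤ R) (hsep : (s : Set V).Pairwise fun x y => δ ≤ dist x y)
    (hs : ∀ x ∈ s, ‖x‖ < R) :
    #s * (δ / 2) ^ finrank ℝ V ≤ (R + δ / 2) ^ finrank ℝ V := by
  borelize V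
  set μ : Measure V := Measure.addHaar
  have hdisj : (s : Set V).PairwiseDisjoint fun x => ball x (δ / 2) :=
    fun x hx y hy hxy => ball_disjoint_ball (by linarith [hsep hx hy hxy])
  have hsub : ⋃ x ∈ s, ball x (δ / 2) ⊆ ball 0 (R + δ / 2) := by
    simp only [Set.iUnion_subset_iff]
    intro x hx y hy
    rw [mem_ball] at hy ⊢
    linarith [dist_triangle y x 0, dist_zero_right x, hs x hx]
  have hvol : (#s : ℝ≥0∞) * ENNReal.ofReal ((δ / 2) ^ finrank ℝ V) * μ (ball 0 1) ≤
      ENNReal.ofReal ((R + δ / 2) ^ finrank ℝ V) * μ (ball 0 1) :=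
    calc (#s : ℝ≥0∞) * ENNReal.ofReal ((δ / 2) ^ finrank ℝ V) * μ (ball 0 1)
        = ∑ x ∈ s, μ (ball x (δ / 2)) := by
          simp only [Measure.addHaar_ball_of_pos μ _ (half_pos hδ), sum_const, nsmul_eq_mul,
            mul_assoc]
      _ = μ (⋃ x ∈ s, ball x (δ / 2)) :=
          (measure_biUnion_finset hdisj fun _ _ => measurableSet_ball).symm
      _ ≤ μ (ball 0 (R + δ / 2)) := measure_mono hsub
      _ = ENNReal.ofReal ((R + δ / 2) ^ finrank ℝ V) * μ (ball 0 1) :=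
          Measure.addHaar_ball_of_pos μ _ (by positivity)
  rw [ENNReal.mul_le_mul_iff_left (measure_ball_pos μ _ one_pos).ne' measure_ball_lt_top.ne,
    ← ENNReal.ofReal_natCast, ← ENNReal.ofReal_mul (by positivity),
    ENNReal.ofReal_le_ofReal_iff (by positivity)] at hvol
  exact hvol

theorem two_mul_add_three_le_exp_two_mul {x : ℝ} (hx : 1 ≤ x) : 2 * x + 3 ≤ exp (2 * x) := by
  nlinarith [quadratic_le_exp_of_nonneg (by linarith : (0 : ℝ) ≤ 2 * x)]

theorem two_mul_add_three_pow_mul_exp_le {k d : ℕ} {δ : ℝ} (hk : 1 ≤ k) (hd : 2 * (d : ℝ) ≤ δ ^ 2) :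
    (2 * k + 3 : ℝ) ^ d * exp (-π * (k * δ) ^ 2) ≤ exp (-δ ^ 2) ^ k := by
  have hk' : (1 : ℝ) ≤ k := by exact_mod_cast hk
  calc (2 * k + 3 : ℝ) ^ d * exp (-π * (k * δ) ^ 2)
      ≤ exp (2 * k) ^ d * exp (-π * (k * δ) ^ 2) := by
        gcongr
        exact two_mul_add_three_le_exp_two_mul hk'
    _ = exp (2 * k * d - π * k ^ 2 * δ ^ 2) := by
        rw [← exp_nat_mul, ← exp_add]; ring_nf
    _ ≤ exp (k * -δ ^ 2) := by
        gcongr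
        have hkd : k * (2 * d) ≤ k * δ ^ 2 := mul_le_mul_of_nonneg_left hd (by positivity)
        have hkk : k * δ ^ 2 ≤ k ^ 2 * δ ^ 2 := by
          rw [sq (k : ℝ), mul_assoc]; exact le_mul_of_one_le_left (by positivity) hk'
        nlinarith [pi_gt_three, sq_nonneg (k * δ)]
    _ = exp (-δ ^ 2) ^ k := exp_nat_mul _ _

theorem log_le_inv_one_sub_mul {x r ρ : ℝ} (hx : 1 ≤ x) (hxr : x ≤ (1 - r)⁻¹)
    (hr : r ≤ ρ) (hρ : ρ < 1) : log x ≤ (1 - ρ)⁻¹ * r := by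
  have h1r : 0 < 1 - r := by linarith
  have hr0 : 0 ≤ r := by
    have := hx.trans hxr
    rw [le_inv_comm₀ one_pos h1r, inv_one] at this
    linarith
  calc log x ≤ x - 1 := log_le_sub_one_of_pos (by linarith)
    _ ≤ (1 - r)⁻¹ - 1 := by linarith
    _ = (1 - r)⁻¹ * r := by field_simp; ring
    _ ≤ (1 - ρ)⁻¹ * r := by gcongr

section ThetaBound

variable {V : Type*} [NormedAddCommGroup V] [NormedSpace ℝ V] [FiniteDimensional ℝ V]
  (L : Submodule ℤ V) {δ : ℝ}

theorem Submodule.card_le_of_norm_lt (hδ : 0 < δ) (hmin : ∀ v ∈ L, v ≠ 0 → δ ≤ ‖v‖)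
    (s : Finset L) (k : ℕ) (hs : ∀ v ∈ s, ‖(v : V)‖ < (k + 1) * δ) :
    (#s : ℝ) ≤ (2 * k + 3) ^ finrank ℝ V := by
  have hsep : ((s.map (Function.Embedding.subtype _) : Finset V) : Set V).Pairwise
      fun x y => δ ≤ dist x y := by
    simp only [coe_map, Function.Embedding.subtype_apply]
    rintro _ ⟨v, -, rfl⟩ _ ⟨w, -, rfl⟩ hvw
    rw [dist_eq_norm]
    exact hmin _ (sub_mem v.2 w.2) (sub_ne_zero.2 hvw)
  have hpack := card_mul_pow_le_of_pairwise_le_dist (R := (k + 1) * δ) hδ (by positivity) hsep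
    (by simpa using hs)
  rw [card_map, show (k + 1) * δ + δ / 2 = (2 * k + 3) * (δ / 2) by ring, mul_pow] at hpack
  exact le_of_mul_le_mul_right hpack (by positivity)

theorem Submodule.sum_exp_le_of_mem_shell (hδ : 0 < δ) (hd : 2 * (finrank ℝ V : ℝ) ≤ δ ^ 2)
    (hmin : ∀ v ∈ L, v ≠ 0 → δ ≤ ‖v‖) (s : Finset L) (k : ℕ)
    (hs : ∀ v ∈ s, k * δ ≤ ‖(v : V)‖ ∧ ‖(v : V)‖ < (k + 1) * δ) :
    ∑ v ∈ s, exp (-π * ‖(v : V)‖ ^ 2) ≤ exp (-δ ^ 2) ^ k := by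
  rcases Nat.eq_zero_or_pos k with rfl | hk
  · have hs0 : s ⊆ {0} := fun v hv => by
      by_contra hv0
      have := (hs v hv).2
      simp only [CharP.cast_eq_zero, zero_add, one_mul] at this
      exact (hmin v v.2 (by simpa using hv0)).not_gt this
    calc ∑ v ∈ s, exp (-π * ‖(v : V)‖ ^ 2)
        ≤ ∑ v ∈ ({0} : Finset L), exp (-π * ‖(v : V)‖ ^ 2) :=
          sum_le_sum_of_subset_of_nonneg hs0 fun _ _ _ => (exp_pos _).le
      _ = exp (-δ ^ 2) ^ 0 := by simp
  · calc ∑ v ∈ s, exp (-π * ‖(v : V)‖ ^ 2)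
        ≤ #s * exp (-π * (k * δ) ^ 2) := by
          rw [← nsmul_eq_mul]
          refine sum_le_card_nsmul _ _ _ fun v hv => ?_
          exact exp_le_exp.2 (mul_le_mul_of_nonpos_left
            (pow_le_pow_left₀ (by positivity) (hs v hv).1 2) (neg_nonpos.2 pi_pos.le))
      _ ≤ (2 * k + 3) ^ finrank ℝ V * exp (-π * (k * δ) ^ 2) := by
          gcongr
          exact L.card_le_of_norm_lt hδ hmin s k fun v hv => (hs v hv).2
      _ ≤ exp (-δ ^ 2) ^ k := two_mul_add_three_pow_mul_exp_le hk hd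

theorem Submodule.summable_exp_and_tsum_le (hδ : 0 < δ) (hd : 2 * (finrank ℝ V : ℝ) ≤ δ ^ 2)
    (hmin : ∀ v ∈ L, v ≠ 0 → δ ≤ ‖v‖) :
    Summable (fun v : L => exp (-π * ‖(v : V)‖ ^ 2)) ∧
      ∑' v : L, exp (-π * ‖(v : V)‖ ^ 2) ≤ (1 - exp (-δ ^ 2))⁻¹ := by
  have hr0 : 0 ≤ exp (-δ ^ 2) := (exp_pos _).le
  have hr1 : exp (-δ ^ 2) < 1 := exp_lt_one_iff.2 (neg_neg_of_pos (pow_pos hδ 2))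
  suffices h : ∀ s : Finset L, ∑ v ∈ s, exp (-π * ‖(v : V)‖ ^ 2) ≤ (1 - exp (-δ ^ 2))⁻¹ from
    ⟨summable_of_sum_le (fun _ => (exp_pos _).le) h,
      Real.tsum_le_of_sum_le (fun _ => (exp_pos _).le) h⟩
  intro s
  set shell : L → ℕ := fun v => ⌊‖(v : V)‖ / δ⌋₊
  rw [← sum_fiberwise_of_maps_to (fun v hv => mem_image_of_mem shell hv)]
  calc ∑ k ∈ s.image shell, ∑ v ∈ s with shell v = k, exp (-π * ‖(v : V)‖ ^ 2)
      ≤ ∑ k ∈ s.image shell, exp (-δ ^ 2) ^ k := by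
        refine sum_le_sum fun k _ => L.sum_exp_le_of_mem_shell hδ hd hmin _ k fun v hv => ?_
        rw [← (mem_filter.1 hv).2, ← le_div_iff₀ hδ, ← div_lt_iff₀ hδ]
        exact ⟨Nat.floor_le (by positivity), Nat.lt_floor_add_one _⟩
    _ ≤ ∑' k, exp (-δ ^ 2) ^ k :=
        Summable.sum_le_tsum _ (fun k _ => pow_nonneg hr0 k) (summable_geometric_of_lt_one hr0 hr1)
    _ = (1 - exp (-δ ^ 2))⁻¹ := tsum_geometric_of_lt_one hr0 hr1

theorem Submodule.abs_log_tsum_exp_le {ρ : ℝ} (hδ : 0 < δ)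
    (hd : 2 * (finrank ℝ V : ℝ) ≤ δ ^ 2) (hmin : ∀ v ∈ L, v ≠ 0 → δ ≤ ‖v‖)
    (hρ : exp (-δ ^ 2) ≤ ρ) (hρ1 : ρ < 1) :
    |log (∑' v : L, exp (-π * ‖(v : V)‖ ^ 2))| ≤ (1 - ρ)⁻¹ * exp (-δ ^ 2) := by
  obtain ⟨hsum, hle⟩ := L.summable_exp_and_tsum_le hδ hd hmin
  have hone : 1 ≤ ∑' v : L, exp (-π * ‖(v : V)‖ ^ 2) := by
    simpa using hsum.le_tsum 0 fun _ _ => (exp_pos _).le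
  rw [abs_of_nonneg (log_nonneg hone)]
  exact log_le_inv_one_sub_mul hone hle hρ hρ1

end ThetaBound

theorem tendsto_mul_sub_mul_sqrt_atTop {a : ℝ} (ha : 0 < a) (b : ℝ) :
    Tendsto (fun n : ℕ => a * n - b * √n) atTop atTop := by
  have hsqrt : Tendsto (fun n : ℕ => √(n : ℝ)) atTop atTop :=
    tendsto_sqrt_atTop.comp tendsto_natCast_atTop_atTop
  refine (hsqrt.atTop_mul_atTop₀
    (tendsto_atTop_add_const_right _ (-b) (hsqrt.const_mul_atTop ha))).congr fun n => ?_
  linear_combination a * mul_self_sqrt (Nat.cast_nonneg (α := ℝ) n)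

theorem eventually_mul_exp_le_mul_exp {α : Type*} {l : Filter α} {f g : α → ℝ}
    (h : Tendsto (fun x => g x - f x) l atTop) (c : ℝ) {c' : ℝ} (hc' : 0 < c') :
    ∀ᶠ x in l, c * exp (f x) ≤ c' * exp (g x) := by
  filter_upwards [(((isLittleO_exp_comp_exp_comp.2 h).const_mul_left c).const_mul_right
    hc'.ne').bound one_pos] with x hx
  rw [one_mul, norm_of_nonneg (by positivity : 0 ≤ c' * exp (g x))] at hx
  exact (le_abs_self _).trans hx

theorem eventually_mul_exp_le_sq_mul_exp_mul_pow {C τ a : ℝ} (hC : C ≠ 0) (hτ : 0 < τ)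
    (ha : a < 2 * log τ⁻¹) (A b c : ℝ) :
    ∀ᶠ n : ℕ in atTop, c * exp (a * n + b * √n) ≤ (C * exp (-A * √n) * (1 / τ) ^ n) ^ 2 := by
  have hsq (n : ℕ) : (C * exp (-A * √n) * (1 / τ) ^ n) ^ 2 =
      C ^ 2 * exp (2 * log τ⁻¹ * n - 2 * A * √n) := by
    rw [one_div, ← exp_log (inv_pos.2 hτ), ← exp_nat_mul, log_exp,
      show 2 * log τ⁻¹ * n - 2 * A * √n = (-A * √n + n * log τ⁻¹) + (-A * √n + n * log τ⁻¹) by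
        ring, exp_add, exp_add]
    ring
  simp only [hsq]
  exact eventually_mul_exp_le_mul_exp
    ((tendsto_mul_sub_mul_sqrt_atTop (sub_pos.2 ha) (2 * A + b)).congr fun n => by ring) c
    (by positivity)

theorem eventually_exp_neg_sq_mul_exp_mul_pow_le_pow {C τ : ℝ} (hC : C ≠ 0) (hτ0 : 0 < τ)
    (hτ1 : τ < 1) (A : ℝ) :
    ∀ᶠ n : ℕ in atTop, exp (-(C * exp (-A * √n) * (1 / τ) ^ n) ^ 2) ≤ τ ^ n := by
  have hB : 0 < log τ⁻¹ := log_pos ((one_lt_inv₀ hτ0).2 hτ1)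
  filter_upwards [eventually_mul_exp_le_sq_mul_exp_mul_pow hC hτ0
    (by linarith : log τ⁻¹ < 2 * log τ⁻¹) A 0 1] with n hn
  rw [zero_mul, add_zero, one_mul] at hn
  rw [← exp_log (pow_pos hτ0 n), exp_le_exp, log_pow, ← neg_neg (log τ), ← log_inv, mul_neg,
    mul_comm]
  linarith [add_one_le_exp (log τ⁻¹ * n)]

theorem summable_theta_invariants_general (E : ℕ → Type*) [∀ n, NormedAddCommGroup (E n)]
    [∀ n, InnerProductSpace ℝ (E n)] [∀ n, FiniteDimensional ℝ (E n)]
    (L : ∀ n, Submodule ℤ (E n))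
    (C C₃ A A₃ : ℝ) (hC : 0 < C)
    (τ : ℝ) (hτ0 : 0 < τ) (hτ1 : τ < 1)
    (hrank : ∀ n : ℕ, (Module.finrank ℝ (E n) : ℝ) ≤ C₃ * Real.exp (A₃ * Real.sqrt n))
    (hmin : ∀ n : ℕ, C * Real.exp (-A * Real.sqrt n) * (1 / τ) ^ n ≤
      sInf ((fun v : E n => ‖v‖) '' {v : E n | v ∈ L n ∧ v ≠ 0})) :
    Summable fun n : ℕ => Real.log (∑' v : L n, Real.exp (-π * ‖(v : E n)‖ ^ 2)) := by
  set lam : ℕ → ℝ := fun n => C * exp (-A * √n) * (1 / τ) ^ n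
  have hlam_le (n : ℕ) (v : E n) (hv : v ∈ L n) (hv0 : v ≠ 0) : lam n ≤ ‖v‖ :=
    (hmin n).trans (csInf_le ⟨0, by rintro _ ⟨w, -, rfl⟩; exact norm_nonneg w⟩ ⟨v, ⟨hv, hv0⟩, rfl⟩)
  refine Summable.of_norm_bounded_eventually
    ((summable_geometric_of_lt_one hτ0.le hτ1).mul_left (1 - τ)⁻¹) ?_
  rw [Nat.cofinite_eq_atTop]
  filter_upwards [eventually_mul_exp_le_sq_mul_exp_mul_pow hC.ne' hτ0
      (mul_pos two_pos (log_pos ((one_lt_inv₀ hτ0).2 hτ1))) A A₃ (2 * C₃),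
    eventually_exp_neg_sq_mul_exp_mul_pow_le_pow hC.ne' hτ0 hτ1 A, eventually_ne_atTop 0]
    with n hrank_n hexp_n hn
  have hdim : 2 * (finrank ℝ (E n) : ℝ) ≤ lam n ^ 2 := by
    rw [zero_mul, zero_add] at hrank_n
    linarith [hrank n]
  calc ‖log (∑' v : L n, exp (-π * ‖(v : E n)‖ ^ 2))‖ ≤ (1 - τ)⁻¹ * exp (-lam n ^ 2) :=
        (L n).abs_log_tsum_exp_le (by positivity) hdim (hlam_le n)
          (hexp_n.trans (pow_le_of_le_one hτ0.le hτ1.le hn)) hτ1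
    _ ≤ (1 - τ)⁻¹ * τ ^ n := by gcongr

/-- Analytic core of the main theta-finiteness theorem: if a sequence of nonzero ℤ-lattices
`L n` satisfies `rank(L n) ≤ C₃ e^{A₃ √n}` and `λ₁(L n) ≥ C e^{-A √n} τ^{-n}` with
`0 < τ < 1`, then the series `∑ₙ h⁰_θ(L n)` converges. -/
theorem summable_theta_invariants (E : ℕ → Type*) [∀ n, NormedAddCommGroup (E n)]
    [∀ n, InnerProductSpace ℝ (E n)] [∀ n, FiniteDimensional ℝ (E n)]
    (L : ∀ n, Submodule ℤ (E n)) [∀ n, DiscreteTopology (L n)] [∀ n, IsZLattice ℝ (L n)]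
    (hL : ∀ n, L n ≠ ⊥)
    (C C₃ A A₃ : ℝ) (hC : 0 < C) (hC₃ : 0 < C₃) (hA : 0 < A) (hA₃ : 0 < A₃)
    (τ : ℝ) (hτ0 : 0 < τ) (hτ1 : τ < 1)
    (hrank : ∀ n : ℕ, (Module.finrank ℝ (E n) : ℝ) ≤ C₃ * Real.exp (A₃ * Real.sqrt n))
    (hmin : ∀ n : ℕ, C * Real.exp (-A * Real.sqrt n) * (1 / τ) ^ n ≤
      sInf ((fun v : E n => ‖v‖) '' {v : E n | v ∈ L n ∧ v ≠ 0})) :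
    Summable fun n : ℕ => Real.log (∑' v : L n, Real.exp (-π * ‖(v : E n)‖ ^ 2)) :=
  summable_theta_invariants_general E L C C₃ A A₃ hC τ hτ0 hτ1 hrank hmin
end
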